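/- Crossing Lemma: Let G be a 3-connected graph other than K4, and let (A,B) and (C,D) be two nontrivial tri-separations of G that cross. Then exactly one of the following holds: (1) all four links have size one and the centre consists of a single vertex; (2) all four links are empty and the centre consists of three vertices. In particular, there are no jumping edges. Moreover, if G[A\B] or G[B\A] is connected (i.e. (A,B) is half-connected), then case (1) holds. -/

import Mathlib

/-!
Each of the four corner separators has order at least three. At a nonempty corner this is
3-connectivity, as the corner separator contains every vertex and edge leaving the corner. At an
empty corner with a separator of order at most two, the degree condition of tri-separations gives
each vertex `u` of a link at that corner a neighbour `x` in the opposite link. If a link edge `ub`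
meets the corner, trading `ux` and `ub` for `u` leaves a separator of order two (the cycle in the
side keeps it nonempty). Otherwise a link that is nonempty alone can be dropped from its
separator, and if both links are nonempty, the graph consists of the four link vertices and is
`K₄`.

Two opposite corner separators together use every element of the two separators at most once,
and the diagonal edges between the other two corners not at all. Hence all four corner separators
have order exactly three, which leaves the two cases of the statement and no room for jumping
edges. In the second case both separators are the centre alone, and `A \ B` as well as `B \ A`
meets two corners that no edge joins.
-/

namespace Paper

open SimpleGraph

variable {V : Type*} [Fintype V] [DecidableEq V]

/-- A graph is `k`-connected if it has more than `k` vertices and deleting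
fewer than `k` vertices never disconnects it. -/
def KConnected {W : Type*} (k : ℕ) (H : SimpleGraph W) : Prop :=
  k < Nat.card W ∧ ∀ S : Set W, S.ncard < k → (H.induce Sᶜ).Connected

/-- A mixed-separation of `G`: `A ∪ B = V(G)` and both `A \ B` and `B \ A` are nonempty. -/
def MixedSep (G : SimpleGraph V) (A B : Set V) : Prop :=
  A ∪ B = Set.univ ∧ (A \ B).Nonempty ∧ (B \ A).Nonempty

/-- The edges of the separator of `(A,B)`: the edges between `A \ B` and `B \ A`. -/
def sepEdges (G : SimpleGraph V) (A B : Set V) : Set (Sym2 V) :=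
  {e | e ∈ G.edgeSet ∧ ∃ x ∈ A \ B, ∃ y ∈ B \ A, e = s(x, y)}

/-- The separator of `(A,B)`: the vertices of `A ∩ B` together with the
edges between `A \ B` and `B \ A`, viewed as a set in `V ⊕ Sym2 V`. -/
def sepSet (G : SimpleGraph V) (A B : Set V) : Set (V ⊕ Sym2 V) :=
  (Sum.inl '' (A ∩ B)) ∪ (Sum.inr '' sepEdges G A B)

/-- The order of a mixed-separation: the size of its separator. -/
noncomputable def sepOrder (G : SimpleGraph V) (A B : Set V) : ℕ :=
  (sepSet G A B).ncard

/-- A mixed `k`-separation. -/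
def MixedKSep (G : SimpleGraph V) (k : ℕ) (A B : Set V) : Prop :=
  MixedSep G A B ∧ sepOrder G A B = k

/-- A tri-separation: a mixed 3-separation such that every vertex of `A ∩ B`
has at least two neighbours in both `G[A]` and `G[B]`. -/
def TriSep (G : SimpleGraph V) (A B : Set V) : Prop :=
  MixedKSep G 3 A B ∧
    ∀ v ∈ A ∩ B, 2 ≤ (G.neighborSet v ∩ A).ncard ∧ 2 ≤ (G.neighborSet v ∩ B).ncard

/-- Two mixed-separations are nested if, after possibly swapping the names of
the sides of either one, `A ⊆ C` and `B ⊇ D`. -/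
def Nested (A B C D : Set V) : Prop :=
  (A ⊆ C ∧ D ⊆ B) ∨ (A ⊆ D ∧ C ⊆ B) ∨ (B ⊆ C ∧ D ⊆ A) ∨ (B ⊆ D ∧ C ⊆ A)

/-- The induced subgraph `G[A]` contains a cycle. -/
def HasCycleIn (G : SimpleGraph V) (A : Set V) : Prop :=
  ∃ (u : V) (p : G.Walk u u), p.IsCycle ∧ ∀ x ∈ p.support, x ∈ A

/-- A mixed 3-separation is nontrivial if both sides induce a subgraph containing a cycle. -/
def NontrivialSep (G : SimpleGraph V) (A B : Set V) : Prop :=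
  HasCycleIn G A ∧ HasCycleIn G B

/-- A mixed-separation is strong if every vertex in its separator has degree at least 4. -/
def StrongSep (G : SimpleGraph V) (A B : Set V) : Prop :=
  ∀ v ∈ A ∩ B, 4 ≤ (G.neighborSet v).ncard

/-- A tri-separation is totally nested if it is nested with every tri-separation of `G`. -/
def TotallyNested (G : SimpleGraph V) (A B : Set V) : Prop :=
  ∀ C D : Set V, TriSep G C D → Nested A B C D

/-- A trivial tri-separation: its sides are the sides `{v}` and `V \ {v}` of an
atomic cut at a degree-3 vertex `v`. -/
def TrivialSep (G : SimpleGraph V) (A B : Set V) : Prop :=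
  ∃ v : V, (G.neighborSet v).ncard = 3 ∧
    ((A = {v} ∧ B = {v}ᶜ) ∨ (B = {v} ∧ A = {v}ᶜ))

/-- Diagonal edges of the crossing-diagram of `(A,B)` and `(C,D)`:
edges whose endvertices lie in opposite corners. -/
def diagEdges (G : SimpleGraph V) (A B C D : Set V) : Set (Sym2 V) :=
  {e | e ∈ G.edgeSet ∧ ∃ x y, e = s(x, y) ∧
    ((x ∈ (A \ B) ∩ (C \ D) ∧ y ∈ (B \ A) ∩ (D \ C)) ∨
     (x ∈ (A \ B) ∩ (D \ C) ∧ y ∈ (B \ A) ∩ (C \ D)))}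

/-- The centre of the crossing-diagram: `A ∩ B ∩ C ∩ D` together with the diagonal edges. -/
def centre (G : SimpleGraph V) (A B C D : Set V) : Set (V ⊕ Sym2 V) :=
  (Sum.inl '' (A ∩ B ∩ C ∩ D)) ∪ (Sum.inr '' diagEdges G A B C D)

/-- The link for the side `C` in the crossing-diagram of `(A,B)` and `(C,D)`:
the vertices `(A ∩ B) \ D` together with the non-diagonal edges of the separator
of `(A,B)` having an endvertex in a corner for `C`. -/
def link (G : SimpleGraph V) (A B C D : Set V) : Set (V ⊕ Sym2 V) :=
  (Sum.inl '' ((A ∩ B) \ D)) ∪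
    (Sum.inr '' {e | e ∈ sepEdges G A B ∧ e ∉ diagEdges G A B C D ∧ ∃ x ∈ e, x ∈ C \ D})

/-- The corner-separator at the corner for `{A,C}`: the union of the links for `A`
and for `C` together with the centre, minus the diagonal edges without an
endvertex in the corner for `{A,C}`. -/
def cornerSep (G : SimpleGraph V) (A B C D : Set V) : Set (V ⊕ Sym2 V) :=
  link G C D A B ∪ link G A B C D ∪ (Sum.inl '' (A ∩ B ∩ C ∩ D)) ∪
    (Sum.inr '' {e | e ∈ diagEdges G A B C D ∧ ∃ x ∈ e, x ∈ (A \ B) ∩ (C \ D)})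

/-- Jumping edges: edges joining vertices of two opposite links. -/
def jumpEdges (G : SimpleGraph V) (A B C D : Set V) : Set (Sym2 V) :=
  {e | e ∈ G.edgeSet ∧ ∃ x y, e = s(x, y) ∧
    ((x ∈ (A ∩ B) \ D ∧ y ∈ (A ∩ B) \ C) ∨ (x ∈ (C ∩ D) \ B ∧ y ∈ (C ∩ D) \ A))}

/-- A 2-separation: a separation of order two with no edges in its separator. -/
def TwoSep (G : SimpleGraph V) (A B : Set V) : Prop :=
  A ∪ B = Set.univ ∧ (A \ B).Nonempty ∧ (B \ A).Nonempty ∧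
    (A ∩ B).ncard = 2 ∧ sepEdges G A B = ∅

/-- `K` is (the vertex set of) a connected component of `G - S`. -/
def IsCompOf (G : SimpleGraph V) (S K : Set V) : Prop :=
  ∃ c : (G.induce Sᶜ).ConnectedComponent, K = Subtype.val '' c.supp

end Paper

namespace Paper

open SimpleGraph

section Connectivity

variable {V : Type*} {G : SimpleGraph V}

lemma KConnected.exists_adj_of_ncard_le_two (h3 : KConnected 3 G) {R T : Set V}
    (hT : T.ncard ≤ 2) {x y : V} (hx : x ∈ R \ T) (hy : y ∈ Rᶜ \ T) :
    ∃ a ∈ R \ T, ∃ b ∈ Rᶜ \ T, G.Adj a b := by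
  obtain ⟨p⟩ := (h3.2 T (by omega)).preconnected ⟨x, hx.2⟩ ⟨y, hy.2⟩
  obtain ⟨d, -, hd₁, hd₂⟩ := p.exists_boundary_dart {a | a.1 ∈ R} hx.1 hy.1
  exact ⟨d.fst, ⟨hd₁, d.fst.2⟩, d.snd, ⟨hd₂, d.snd.2⟩, d.adj⟩

lemma KConnected.adj_of_card_le_four [Finite V] (h3 : KConnected 3 G) (hcard : Nat.card V ≤ 4)
    {u v : V} (huv : u ≠ v) : G.Adj u v := by
  have hT : ({u, v}ᶜ : Set V).ncard ≤ 2 := by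
    have := Set.ncard_add_ncard_compl ({u, v} : Set V)
    rw [Set.ncard_pair huv] at this
    omega
  obtain ⟨a, ha, b, hb, hab⟩ := h3.exists_adj_of_ncard_le_two (R := {u}) hT
    (x := u) (y := v) (by simp) (by simp [huv.symm])
  simp only [Set.mem_sdiff, Set.mem_singleton_iff, Set.mem_compl_iff, not_not,
    Set.mem_insert_iff] at ha hb
  rcases hb with ⟨hbu, rfl | rfl⟩
  · exact absurd rfl hbu
  · rwa [ha.1] at hab

lemma KConnected.four_lt_card [Finite V] (h3 : KConnected 3 G)
    (hK4 : ¬ Nonempty (G ≃g completeGraph (Fin 4))) : 4 < Nat.card V := by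
  by_contra! hcard
  have hV : Nat.card V = 4 := le_antisymm hcard h3.1
  let e := Finite.equivFinOfCardEq hV
  refine hK4 ⟨⟨e, fun {a b} => ?_⟩⟩
  rw [completeGraph, top_adj, e.injective.ne_iff]
  exact ⟨h3.adj_of_card_le_four hcard, G.ne_of_adj⟩

lemma HasCycleIn.three_le_ncard [Finite V] {A : Set V} (h : HasCycleIn G A) : 3 ≤ A.ncard := by
  classical
  obtain ⟨u, p, hp, hA⟩ := h
  calc 3 ≤ p.support.tail.length := by simpa using hp.three_le_length
    _ = (↑p.support.tail.toFinset : Set V).ncard := by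
      rw [Set.ncard_coe_finset, List.toFinset_card_of_nodup hp.support_nodup]
    _ ≤ A.ncard := Set.ncard_le_ncard fun x hx =>
      hA x (List.mem_of_mem_tail (by simpa using hx))

lemma ncard_le_ncard_of_forall_exists_mk_mem [Finite V] {X Y : Set V} {F : Set (Sym2 V)}
    (hXY : Disjoint X Y) (h : ∀ y ∈ Y, ∃ x ∈ X, s(x, y) ∈ F) : Y.ncard ≤ F.ncard := by
  choose! g hgX hgF using h
  refine Set.ncard_le_ncard_of_injOn (fun y => s(g y, y)) hgF fun y hy z hz hyz => ?_
  rcases Sym2.eq_iff.1 hyz with ⟨-, h⟩ | ⟨h, -⟩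
  · exact h
  · exact absurd (h ▸ hgX y hy) (Set.disjoint_right.1 hXY hz)

lemma KConnected.forall_exists_mk_mem [Finite V] (h3 : KConnected 3 G) {R S : Set V}
    {F : Set (Sym2 V)} (hF : ∀ x ∈ R \ S, ∀ y ∈ Rᶜ \ S, G.Adj x y → s(x, y) ∈ F)
    (hR : (R \ S).Nonempty) (hSF : S.ncard + F.ncard ≤ 2) :
    ∀ y ∈ Rᶜ \ S, ∃ x ∈ R \ S, s(x, y) ∈ F := by
  by_contra! ⟨y, hy, hyF⟩
  set E := {b ∈ Rᶜ \ S | ∃ a ∈ R \ S, s(a, b) ∈ F}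
  have hE : E.ncard ≤ F.ncard := ncard_le_ncard_of_forall_exists_mk_mem
    (Set.disjoint_left.2 fun a ha ha' => ha'.1.1 ha.1) fun b hb => hb.2
  obtain ⟨x, hx⟩ := hR
  obtain ⟨a, ha, b, hb, hab⟩ := h3.exists_adj_of_ncard_le_two (R := R) (T := S ∪ E)
    ((Set.ncard_union_le S E).trans (by omega)) (x := x) (y := y)
    ⟨hx.1, fun h => h.elim hx.2 fun h => h.1.1 hx.1⟩
    ⟨hy.1, fun h => h.elim hy.2 fun ⟨_, a, ha, haF⟩ => hyF a ha haF⟩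
  have ha' : a ∈ R \ S := ⟨ha.1, fun h => ha.2 (Or.inl h)⟩
  have hb' : b ∈ Rᶜ \ S := ⟨hb.1, fun h => hb.2 (Or.inl h)⟩
  exact hb.2 (Or.inr ⟨hb', a, ha', hF a ha' b hb' hab⟩)

/-- Every mixed-separation of a 3-connected graph has order at least three: here the sides are
`R ∪ S` and `Rᶜ ∪ S`, and `F` contains the edges between `R \ S` and `Rᶜ \ S`. -/
theorem KConnected.three_le_ncard_add_ncard [Finite V] (h3 : KConnected 3 G) {R S : Set V}
    {F : Set (Sym2 V)} (hF : ∀ x ∈ R \ S, ∀ y ∈ Rᶜ \ S, G.Adj x y → s(x, y) ∈ F)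
    (hR : (R \ S).Nonempty) (hRc : (Rᶜ \ S).Nonempty) : 3 ≤ S.ncard + F.ncard := by
  by_contra! h
  have hSF : S.ncard + F.ncard ≤ 2 := by omega
  have hF' : ∀ x ∈ Rᶜ \ S, ∀ y ∈ Rᶜᶜ \ S, G.Adj x y → s(x, y) ∈ F := fun x hx y hy hxy => by
    rw [Sym2.eq_swap]
    exact hF y (by rwa [compl_compl] at hy) x hx hxy.symm
  have hdisj : Disjoint (R \ S) (Rᶜ \ S) := Set.disjoint_left.2 fun a ha ha' => ha'.1 ha.1
  -- by 3-connectivity every vertex outside `S` is an end of an edge of `F`, so `G` is a `K₄`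
  have hout := ncard_le_ncard_of_forall_exists_mk_mem hdisj (h3.forall_exists_mk_mem hF hR hSF)
  have hin := ncard_le_ncard_of_forall_exists_mk_mem (by rwa [compl_compl, disjoint_comm])
    (h3.forall_exists_mk_mem hF' hRc hSF)
  rw [compl_compl] at hin
  have hcard : S.ncard + ((R \ S).ncard + (Rᶜ \ S).ncard) = Nat.card V := by
    rw [← Set.ncard_add_ncard_compl S, ← Set.ncard_inter_add_ncard_sdiff_eq_ncard Sᶜ R]
    congr 2 <;> congr 1 <;> ext <;> simp [and_comm]
  have hprod : ((R \ S) ×ˢ (Rᶜ \ S)).ncard ≤ F.ncard := by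
    refine Set.ncard_le_ncard_of_injOn (fun p => s(p.1, p.2))
      (fun p hp => hF _ hp.1 _ hp.2
        (h3.adj_of_card_le_four (by omega) fun h => hp.2.1 (h ▸ hp.1.1)))
      fun p hp q hq hpq => ?_
    rcases Sym2.eq_iff.1 hpq with ⟨h1, h2⟩ | ⟨h1, -⟩
    · exact Prod.ext h1 h2
    · exact absurd (h1 ▸ hp.1.1) hq.2.1
  rw [Set.ncard_prod] at hprod
  have ha := hR.ncard_pos
  have hb := hRc.ncard_pos
  have := h3.1
  nlinarith [Nat.mul_le_mul ha hb]

lemma KConnected.subset_pair_of_forall_adj_mem [Finite V] (h3 : KConnected 3 G) {R : Set V}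
    {p q o : V} (ho : o ∉ R) (hop : o ≠ p) (hoq : o ≠ q)
    (hR : ∀ a ∈ R, a ≠ p → a ≠ q → ∀ b, G.Adj a b → b ∈ R) : R ⊆ {p, q} := by
  by_contra h
  obtain ⟨a, haR, hapq⟩ := Set.not_subset.1 h
  simp only [Set.mem_insert_iff, Set.mem_singleton_iff, not_or] at hapq
  have h3pq := h3.three_le_ncard_add_ncard (S := {p, q}) (F := ∅)
    (fun a ha b hb hab => by
      simp only [Set.mem_sdiff, Set.mem_insert_iff, Set.mem_singleton_iff, not_or] at ha
      exact absurd (hR a ha.1 ha.2.1 ha.2.2 b hab) hb.1)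
    ⟨a, haR, by simp [hapq.1, hapq.2]⟩ ⟨o, ho, by simp [hop, hoq]⟩
  have hpq := Set.ncard_insert_le p {q}
  rw [Set.ncard_empty] at h3pq
  rw [Set.ncard_singleton] at hpq
  omega

end Connectivity

section CrossingDiagram

variable {V : Type*} {G : SimpleGraph V} {A B C D : Set V} {x y : V}

lemma mem_or_mem_of_union_eq_univ (h : A ∪ B = Set.univ) (x : V) : x ∈ A ∨ x ∈ B :=
  Set.eq_univ_iff_forall.1 h x

lemma mk_mem_sepEdges :
    s(x, y) ∈ sepEdges G A B ↔ G.Adj x y ∧ (x ∈ A \ B ∧ y ∈ B \ A ∨ y ∈ A \ B ∧ x ∈ B \ A) := by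
  simp only [sepEdges, Set.mem_ofPred_eq, mem_edgeSet, Sym2.eq_iff]
  constructor
  · rintro ⟨h, a, ha, b, hb, ⟨rfl, rfl⟩ | ⟨rfl, rfl⟩⟩ <;> tauto
  · rintro ⟨h, ⟨hx, hy⟩ | ⟨hy, hx⟩⟩
    · exact ⟨h, x, hx, y, hy, Or.inl ⟨rfl, rfl⟩⟩
    · exact ⟨h, y, hy, x, hx, Or.inr ⟨rfl, rfl⟩⟩

lemma sepEdges_comm : sepEdges G B A = sepEdges G A B := by
  ext e
  induction e using Sym2.ind
  simp only [mk_mem_sepEdges]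
  tauto

lemma diagEdges_eq_inter : diagEdges G A B C D = sepEdges G A B ∩ sepEdges G C D := by
  ext e
  induction e using Sym2.ind with | _ x y => ?_
  simp only [Set.mem_inter_iff, mk_mem_sepEdges, diagEdges, Set.mem_ofPred_eq, mem_edgeSet,
    Sym2.eq_iff]
  constructor
  · rintro ⟨h, a, b, ⟨rfl, rfl⟩ | ⟨rfl, rfl⟩, hab⟩ <;> tauto
  · rintro ⟨⟨h, hAB⟩, -, hCD⟩
    rcases hAB with hAB | hAB <;> rcases hCD with hCD | hCD <;>
      first
      | exact ⟨h, x, y, Or.inl ⟨rfl, rfl⟩, by tauto⟩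
      | exact ⟨h, y, x, Or.inr ⟨rfl, rfl⟩, by tauto⟩

lemma diagEdges_comm_left : diagEdges G B A C D = diagEdges G A B C D := by
  rw [diagEdges_eq_inter, diagEdges_eq_inter, sepEdges_comm]

lemma diagEdges_swap : diagEdges G C D A B = diagEdges G A B C D := by
  rw [diagEdges_eq_inter, diagEdges_eq_inter, Set.inter_comm]

lemma inter_inter_inter_swap : C ∩ D ∩ A ∩ B = A ∩ B ∩ C ∩ D := by
  rw [Set.inter_assoc (C ∩ D), Set.inter_comm (C ∩ D), ← Set.inter_assoc]

def linkEdges (G : SimpleGraph V) (A B C D : Set V) : Set (Sym2 V) :=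
  {e | e ∈ sepEdges G A B ∧ e ∉ diagEdges G A B C D ∧ ∃ x ∈ e, x ∈ C \ D}

lemma mk_mem_linkEdges : s(x, y) ∈ linkEdges G A B C D ↔
    s(x, y) ∈ sepEdges G A B ∧ s(x, y) ∉ sepEdges G C D ∧ (x ∈ C \ D ∨ y ∈ C \ D) := by
  simp only [linkEdges, diagEdges_eq_inter, Set.mem_ofPred_eq, Set.mem_inter_iff, Sym2.mem_iff,
    exists_eq_or_imp, exists_eq_left]
  tauto

lemma link_comm : link G B A C D = link G A B C D := by
  simp only [link, sepEdges_comm (A := A), diagEdges_comm_left, Set.inter_comm B A]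

lemma ncard_inl_union_inr [Finite V] (S : Set V) (F : Set (Sym2 V)) :
    (Sum.inl '' S ∪ Sum.inr '' F : Set (V ⊕ Sym2 V)).ncard = S.ncard + F.ncard := by
  rw [Set.ncard_union_eq, Set.ncard_image_of_injective _ Sum.inl_injective,
    Set.ncard_image_of_injective _ Sum.inr_injective]
  exact Set.disjoint_left.2 fun _ ⟨_, _, ha⟩ ⟨_, _, hb⟩ => Sum.inl_ne_inr (ha.trans hb.symm)

lemma ncard_link [Finite V] :
    (link G A B C D).ncard = ((A ∩ B) \ D).ncard + (linkEdges G A B C D).ncard :=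
  ncard_inl_union_inr _ _

lemma sepOrder_eq [Finite V] : sepOrder G A B = (A ∩ B).ncard + (sepEdges G A B).ncard :=
  ncard_inl_union_inr _ _

lemma sepOrder_comm : sepOrder G B A = sepOrder G A B := by
  rw [sepOrder, sepSet, Set.inter_comm, sepEdges_comm]
  rfl

lemma TriSep.symm (h : TriSep G A B) : TriSep G B A := by
  obtain ⟨⟨⟨hU, hAB, hBA⟩, h3⟩, hdeg⟩ := h
  exact ⟨⟨⟨Set.union_comm A B ▸ hU, hBA, hAB⟩, sepOrder_comm.trans h3⟩,
    fun v hv => (hdeg v (Set.inter_comm A B ▸ hv)).symm⟩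

lemma ncard_inter_eq [Finite V] (hU : C ∪ D = Set.univ) :
    (A ∩ B).ncard = ((A ∩ B) \ D).ncard + ((A ∩ B) \ C).ncard + (A ∩ B ∩ C ∩ D).ncard := by
  have h1 := Set.ncard_inter_add_ncard_sdiff_eq_ncard (A ∩ B) D
  have h2 := Set.ncard_inter_add_ncard_sdiff_eq_ncard (A ∩ B ∩ D) C
  have h3 : (A ∩ B ∩ D) \ C = (A ∩ B) \ C := by
    ext v
    have := mem_or_mem_of_union_eq_univ hU v
    simp only [Set.mem_sdiff, Set.mem_inter_iff]
    tauto
  rw [Set.inter_right_comm, h3] at h2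
  omega

def cornerDiagEdges (G : SimpleGraph V) (A B C D : Set V) : Set (Sym2 V) :=
  {e ∈ diagEdges G A B C D | ∃ x ∈ e, x ∈ (A \ B) ∩ (C \ D)}

lemma cornerDiagEdges_comm : cornerDiagEdges G B A D C = cornerDiagEdges G A B C D := by
  ext e
  induction e using Sym2.ind
  simp only [cornerDiagEdges, diagEdges_eq_inter, Set.mem_ofPred_eq, Set.mem_inter_iff,
    mk_mem_sepEdges, Sym2.mem_iff, exists_eq_or_imp, exists_eq_left, Set.mem_sdiff]
  tauto

lemma ncard_diagEdges [Finite V] : (diagEdges G A B C D).ncard =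
    (cornerDiagEdges G A B C D).ncard + (cornerDiagEdges G A B D C).ncard := by
  rw [← Set.ncard_union_eq]
  · congr 1
    ext e
    induction e using Sym2.ind
    simp only [cornerDiagEdges, diagEdges_eq_inter, Set.mem_union, Set.mem_ofPred_eq,
      Set.mem_inter_iff, mk_mem_sepEdges, Sym2.mem_iff, exists_eq_or_imp, exists_eq_left,
      Set.mem_sdiff]
    grind
  · refine Set.disjoint_left.2 fun e => Sym2.ind (fun x y h1 h2 => ?_) e
    simp only [cornerDiagEdges, diagEdges_eq_inter, Set.mem_ofPred_eq, Set.mem_inter_iff,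
      mk_mem_sepEdges, Sym2.mem_iff, exists_eq_or_imp, exists_eq_left, Set.mem_sdiff] at h1 h2
    grind

lemma mk_mem_jumpEdges : s(x, y) ∈ jumpEdges G A B C D ↔ G.Adj x y ∧
    (x ∈ (A ∩ B) \ D ∧ y ∈ (A ∩ B) \ C ∨ y ∈ (A ∩ B) \ D ∧ x ∈ (A ∩ B) \ C ∨
      x ∈ (C ∩ D) \ B ∧ y ∈ (C ∩ D) \ A ∨ y ∈ (C ∩ D) \ B ∧ x ∈ (C ∩ D) \ A) := by
  simp only [jumpEdges, Set.mem_ofPred_eq, mem_edgeSet, Sym2.eq_iff]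
  constructor
  · rintro ⟨h, a, b, ⟨rfl, rfl⟩ | ⟨rfl, rfl⟩, hab⟩ <;> tauto
  · rintro ⟨h, hxy | hxy | hxy | hxy⟩
    · exact ⟨h, x, y, Or.inl ⟨rfl, rfl⟩, Or.inl hxy⟩
    · exact ⟨h, y, x, Or.inr ⟨rfl, rfl⟩, Or.inl hxy⟩
    · exact ⟨h, x, y, Or.inl ⟨rfl, rfl⟩, Or.inr hxy⟩
    · exact ⟨h, y, x, Or.inr ⟨rfl, rfl⟩, Or.inr hxy⟩

lemma jumpEdges_swap : jumpEdges G C D A B = jumpEdges G A B C D := by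
  ext e
  induction e using Sym2.ind
  simp only [mk_mem_jumpEdges]
  tauto

lemma jumpEdges_subset [Finite V] (hU1 : A ∪ B = Set.univ) (hU2 : C ∪ D = Set.univ) :
    jumpEdges G A B C D ⊆ sepEdges G A B ∪ sepEdges G C D := by
  refine fun e => Sym2.ind (fun x y h => ?_) e
  have := mem_or_mem_of_union_eq_univ hU1 x
  have := mem_or_mem_of_union_eq_univ hU1 y
  have := mem_or_mem_of_union_eq_univ hU2 x
  have := mem_or_mem_of_union_eq_univ hU2 y
  simp only [mk_mem_jumpEdges, Set.mem_union, mk_mem_sepEdges, Set.mem_sdiff,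
    Set.mem_inter_iff] at h ⊢
  grind

lemma ncard_link_add_ncard_link_add_le_sepOrder [Finite V] (hU : C ∪ D = Set.univ) :
    (link G A B C D).ncard + (link G A B D C).ncard + (A ∩ B ∩ C ∩ D).ncard +
      (diagEdges G A B C D).ncard + (jumpEdges G A B C D ∩ sepEdges G A B).ncard ≤
      sepOrder G A B := by
  have := ncard_inter_eq (A := A) (B := B) hU
  rw [sepOrder_eq, ncard_link, ncard_link]
  suffices (linkEdges G A B C D).ncard + (linkEdges G A B D C).ncard +
      (diagEdges G A B C D).ncard + (jumpEdges G A B C D ∩ sepEdges G A B).ncard ≤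
      (sepEdges G A B).ncard by omega
  have hdisj : ∀ {S T : Set (Sym2 V)}, (∀ x y, s(x, y) ∈ S → s(x, y) ∈ T → False) →
      Disjoint S T := fun h => Set.disjoint_left.2 fun e => Sym2.ind h e
  rw [← Set.ncard_union_eq, ← Set.ncard_union_eq, ← Set.ncard_union_eq]
  · refine Set.ncard_le_ncard (Set.union_subset (Set.union_subset (Set.union_subset
      (fun _ h => h.1) fun _ h => h.1) ?_) Set.inter_subset_right)
    rw [diagEdges_eq_inter]
    exact Set.inter_subset_left
  all_goals
    refine hdisj fun x y h1 h2 => ?_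
    simp only [Set.mem_union, Set.mem_inter_iff, mk_mem_linkEdges, diagEdges_eq_inter,
      mk_mem_jumpEdges, mk_mem_sepEdges, Set.mem_sdiff] at h1 h2
    grind

def cornerSepVerts (A B C D : Set V) : Set V :=
  (C ∩ D) \ B ∪ (A ∩ B) \ D ∪ A ∩ B ∩ C ∩ D

def cornerSepEdges (G : SimpleGraph V) (A B C D : Set V) : Set (Sym2 V) :=
  linkEdges G C D A B ∪ linkEdges G A B C D ∪ cornerDiagEdges G A B C D

lemma cornerSep_eq :
    cornerSep G A B C D = Sum.inl '' cornerSepVerts A B C D ∪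
      Sum.inr '' cornerSepEdges G A B C D := by
  simp only [cornerSep, link, cornerSepVerts, cornerSepEdges, linkEdges, cornerDiagEdges,
    Set.image_union]
  ext
  simp only [Set.mem_union]
  tauto

lemma cornerSep_swap : cornerSep G C D A B = cornerSep G A B C D := by
  simp only [cornerSep, diagEdges_swap, Set.inter_comm (C \ D) (A \ B), inter_inter_inter_swap]
  ext
  simp only [Set.mem_union]
  tauto

lemma ncard_cornerSep [Finite V] : (cornerSep G A B C D).ncard =
    (cornerSepVerts A B C D).ncard + (cornerSepEdges G A B C D).ncard := by
  rw [cornerSep_eq, ncard_inl_union_inr]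

lemma ncard_cornerSepVerts [Finite V] : (cornerSepVerts A B C D).ncard =
    ((C ∩ D) \ B).ncard + ((A ∩ B) \ D).ncard + (A ∩ B ∩ C ∩ D).ncard := by
  rw [cornerSepVerts, Set.ncard_union_eq, Set.ncard_union_eq]
  · exact Set.disjoint_left.2 fun v h1 h2 => h1.2 h2.1.2
  · exact Set.disjoint_left.2 fun v h1 h2 => h1.elim (fun h => h.2 h2.1.1.2) fun h => h.2 h2.2

lemma ncard_cornerSep_le [Finite V] : (cornerSep G A B C D).ncard ≤
    (link G C D A B).ncard + (link G A B C D).ncard + (A ∩ B ∩ C ∩ D).ncard +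
      (cornerDiagEdges G A B C D).ncard := by
  have h1 := Set.ncard_union_le (linkEdges G C D A B ∪ linkEdges G A B C D)
    (cornerDiagEdges G A B C D)
  have h2 := Set.ncard_union_le (linkEdges G C D A B) (linkEdges G A B C D)
  rw [ncard_cornerSep, ncard_cornerSepVerts, ncard_link, ncard_link, cornerSepEdges]
  omega

lemma ncard_cornerSepVerts_add_ncard_linkEdges_le [Finite V] :
    ((C ∩ D) \ B).ncard + ((A ∩ B) \ D).ncard + (A ∩ B ∩ C ∩ D).ncard +
      (linkEdges G C D A B).ncard ≤ (cornerSep G A B C D).ncard := by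
  rw [ncard_cornerSep, ncard_cornerSepVerts, cornerSepEdges, Set.union_assoc]
  have := Set.ncard_le_ncard (Set.subset_union_left (s := linkEdges G C D A B)
    (t := linkEdges G A B C D ∪ cornerDiagEdges G A B C D))
  omega

lemma exists_eq_mk_of_mem_linkEdges {g : Sym2 V} (hU1 : A ∪ B = Set.univ)
    (hI : (A \ B) ∩ (C \ D) = ∅) (hg : g ∈ linkEdges G C D A B) :
    ∃ u b, g = s(u, b) ∧ u ∈ (A ∩ B) \ D ∧ b ∈ (A \ B) ∩ (D \ C) := by
  induction g using Sym2.ind with | _ p q => ?_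
  have := mem_or_mem_of_union_eq_univ hU1 p
  have := mem_or_mem_of_union_eq_univ hU1 q
  have hp : p ∉ (A \ B) ∩ (C \ D) := hI ▸ Set.notMem_empty p
  have hq : q ∉ (A \ B) ∩ (C \ D) := hI ▸ Set.notMem_empty q
  simp only [mk_mem_linkEdges, mk_mem_sepEdges, Set.mem_sdiff, Set.mem_inter_iff] at hg hp hq
  rcases hg with ⟨⟨hadj, hpq⟩, hAB, hpA | hqA⟩
  · exact ⟨q, p, Sym2.eq_swap, by grind⟩
  · exact ⟨p, q, rfl, by grind⟩

lemma mem_of_adj_of_sepEdges_subsingleton (hU1 : A ∪ B = Set.univ) (hU2 : C ∪ D = Set.univ)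
    {u w x y a b : V} (hP : ∀ v ∈ (A ∩ B) \ D, v = u) (hQ : ∀ v ∈ (A ∩ B) \ C, v = x)
    (hP' : ∀ v ∈ (C ∩ D) \ B, v = w) (hQ' : ∀ v ∈ (C ∩ D) \ A, v = y)
    (hZ : A ∩ B ∩ C ∩ D = ∅) (hAB : ∀ e ∈ sepEdges G A B, e = s(w, y))
    (hCD : ∀ e ∈ sepEdges G C D, e = s(u, x)) (hab : G.Adj a b) (hau : a ≠ u) (haw : a ≠ w)
    (hax : a ≠ x) (hay : a ≠ y) :
    (a ∈ A → b ∈ A) ∧ (a ∈ B → b ∈ B) ∧ (a ∈ C → b ∈ C) ∧ (a ∈ D → b ∈ D) := by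
  have h1 := hAB s(a, b)
  have h2 := hCD s(a, b)
  have := hP a
  have := hQ a
  have := hP' a
  have := hQ' a
  have : a ∉ A ∩ B ∩ C ∩ D := hZ ▸ Set.notMem_empty a
  have := mem_or_mem_of_union_eq_univ hU1 b
  have := mem_or_mem_of_union_eq_univ hU2 b
  simp only [mk_mem_sepEdges, Sym2.eq_iff, Set.mem_sdiff, Set.mem_inter_iff] at *
  grind

lemma corner_nonempty_or_link_nonempty (hU1 : A ∪ B = Set.univ) (hU2 : C ∪ D = Set.univ)
    (hAC : ¬(A ⊆ D ∧ C ⊆ B)) :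
    ((A \ B) ∩ (C \ D)).Nonempty ∨ ((A ∩ B) \ D).Nonempty ∨ ((C ∩ D) \ B).Nonempty := by
  rw [not_and_or, Set.not_subset, Set.not_subset] at hAC
  rcases hAC with ⟨a, ha, haD⟩ | ⟨c, hc, hcB⟩
  · by_cases haB : a ∈ B
    · exact Or.inr (Or.inl ⟨a, ⟨ha, haB⟩, haD⟩)
    · exact Or.inl ⟨a, ⟨ha, haB⟩, (mem_or_mem_of_union_eq_univ hU2 a).resolve_right haD, haD⟩
  · by_cases hcD : c ∈ D
    · exact Or.inr (Or.inr ⟨c, ⟨hc, hcD⟩, hcB⟩)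
    · exact Or.inl ⟨c, ⟨(mem_or_mem_of_union_eq_univ hU1 c).resolve_right hcB, hcB⟩, hc, hcD⟩

lemma sepEdges_nonempty_of_induce_connected {X : Set V} (hX : (G.induce X).Connected)
    (hXCD : Disjoint X (C ∩ D)) (hU : C ∪ D = Set.univ) (hx : x ∈ X ∩ (C \ D))
    (hy : y ∈ X ∩ (D \ C)) : (sepEdges G C D).Nonempty := by
  obtain ⟨p⟩ := hX.preconnected ⟨x, hx.1⟩ ⟨y, hy.1⟩
  obtain ⟨d, -, hd₁, hd₂⟩ := p.exists_boundary_dart {a | a.1 ∈ C} hx.2.1 hy.2.2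
  have hd₁D : d.fst.1 ∉ D := fun h => Set.disjoint_left.1 hXCD d.fst.2 ⟨hd₁, h⟩
  have hd₂D := (mem_or_mem_of_union_eq_univ hU d.snd.1).resolve_left hd₂
  exact ⟨_, mk_mem_sepEdges.2 ⟨d.adj, Or.inl ⟨⟨hd₁, hd₁D⟩, hd₂D, hd₂⟩⟩⟩

lemma not_connected_induce_sdiff (hU1 : A ∪ B = Set.univ) (hU2 : C ∪ D = Set.univ)
    (hAC : ¬(A ⊆ D ∧ C ⊆ B)) (hAD : ¬(A ⊆ C ∧ D ⊆ B)) (hP : (A ∩ B) \ D = ∅)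
    (hQ : (A ∩ B) \ C = ∅) (hP' : (C ∩ D) \ B = ∅) (hsep : sepEdges G C D = ∅) :
    ¬(G.induce (A \ B)).Connected := by
  intro hconn
  obtain ⟨x, hx⟩ := (corner_nonempty_or_link_nonempty hU1 hU2 hAC).resolve_right
    (by simp [hP, hP'])
  obtain ⟨y, hy⟩ := (corner_nonempty_or_link_nonempty hU1 (Set.union_comm C D ▸ hU2)
    hAD).resolve_right (by simp [hQ, Set.inter_comm D C, hP'])
  have hdisj : Disjoint (A \ B) (C ∩ D) := Set.disjoint_left.2 fun v hv hv' =>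
    (hP' ▸ ⟨hv', hv.2⟩ : v ∈ (∅ : Set V))
  exact (sepEdges_nonempty_of_induce_connected hconn hdisj hU2 hx hy).ne_empty hsep

end CrossingDiagram

section Corners

variable {V : Type*} [Finite V] {G : SimpleGraph V} {A B C D : Set V} {u x y : V}

lemma three_le_ncard_cornerSep_of_nonempty (h3 : KConnected 3 G) (hU1 : A ∪ B = Set.univ)
    (hU2 : C ∪ D = Set.univ) (hBA : (B \ A).Nonempty) (hI : ((A \ B) ∩ (C \ D)).Nonempty) :
    3 ≤ (cornerSep G A B C D).ncard := by
  rw [ncard_cornerSep]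
  refine h3.three_le_ncard_add_ncard (R := A ∩ C) (fun x hx y hy hxy => ?_) ?_ ?_
  · have := mem_or_mem_of_union_eq_univ hU1 y
    have := mem_or_mem_of_union_eq_univ hU2 y
    simp only [cornerSepVerts, cornerSepEdges, cornerDiagEdges, diagEdges_eq_inter,
      Set.mem_union, Set.mem_ofPred_eq, Set.mem_inter_iff, Set.mem_sdiff, Set.mem_compl_iff,
      mk_mem_linkEdges, mk_mem_sepEdges, Sym2.mem_iff, exists_eq_or_imp, exists_eq_left]
      at hx hy ⊢
    grind
  · obtain ⟨v, hv⟩ := hI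
    refine ⟨v, ⟨hv.1.1, hv.2.1⟩, ?_⟩
    simp only [cornerSepVerts, Set.mem_union, Set.mem_inter_iff, Set.mem_sdiff] at hv ⊢
    tauto
  · obtain ⟨v, hv⟩ := hBA
    refine ⟨v, fun h => hv.2 h.1, ?_⟩
    simp only [cornerSepVerts, Set.mem_union, Set.mem_inter_iff, Set.mem_sdiff] at hv ⊢
    tauto

lemma exists_adj_of_ncard_cornerSep_le_two (hAB : TriSep G A B) (hU2 : C ∪ D = Set.univ)
    (hI : (A \ B) ∩ (C \ D) = ∅) (hσ : (cornerSep G A B C D).ncard ≤ 2)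
    (hu : u ∈ (A ∩ B) \ D) : ∃ x ∈ (A ∩ B) \ C, G.Adj u x := by
  by_contra! hno
  have hsub : G.neighborSet u ∩ A ⊆
      cornerSepVerts A B C D \ {u} ∪ {v | s(u, v) ∈ linkEdges G C D A B} := by
    rintro v ⟨huv, hvA⟩
    have hvI : v ∉ (A \ B) ∩ (C \ D) := hI ▸ Set.notMem_empty v
    have := hno v
    have := mem_or_mem_of_union_eq_univ hU2 v
    have := mem_or_mem_of_union_eq_univ hU2 u
    have hvu : v ≠ u := (G.ne_of_adj huv).symm
    rw [mem_neighborSet] at huv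
    simp only [cornerSepVerts, Set.mem_union, Set.mem_inter_iff, Set.mem_sdiff,
      Set.mem_singleton_iff, Set.mem_ofPred_eq, mk_mem_linkEdges, mk_mem_sepEdges] at hu hvI this ⊢
    grind
  have hW : u ∈ cornerSepVerts A B C D := Or.inl (Or.inr hu)
  have hL : {v | s(u, v) ∈ linkEdges G C D A B}.ncard ≤ (linkEdges G C D A B).ncard :=
    Set.ncard_le_ncard_of_injOn (fun v => s(u, v)) (fun _ hv => hv)
      fun _ _ _ _ h => Sym2.congr_right.1 h
  have h1 := Set.ncard_le_ncard hsub
  have h2 := Set.ncard_union_le (cornerSepVerts A B C D \ {u})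
    {v | s(u, v) ∈ linkEdges G C D A B}
  have h3 := ncard_cornerSepVerts_add_ncard_linkEdges_le (G := G) (A := A) (B := B) (C := C)
    (D := D)
  rw [Set.ncard_sdiff_singleton_of_mem hW, ncard_cornerSepVerts] at h2
  have := (hAB.2 u hu.1).1
  have := (Set.nonempty_of_mem hu).ncard_pos
  omega

lemma linkEdges_eq_empty_of_ncard_cornerSep_le_two (h3 : KConnected 3 G)
    (hAB : TriSep G A B) (hCD : TriSep G C D) (hC : HasCycleIn G C)
    (hI : (A \ B) ∩ (C \ D) = ∅) (hσ : (cornerSep G A B C D).ncard ≤ 2) :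
    linkEdges G C D A B = ∅ := by
  have hU2 := hCD.1.1.1
  refine Set.eq_empty_iff_forall_notMem.2 fun g hg => ?_
  obtain ⟨u, b, rfl, hu, hb⟩ := exists_eq_mk_of_mem_linkEdges hAB.1.1.1 hI hg
  obtain ⟨x, hx, hux⟩ := exists_adj_of_ncard_cornerSep_le_two hAB hU2 hI hσ hu
  have huC : u ∈ C := (mem_or_mem_of_union_eq_univ hU2 u).resolve_right hu.2
  have hxD : x ∈ D := (mem_or_mem_of_union_eq_univ hU2 x).resolve_left hx.2
  have hpair : {s(u, x), s(u, b)} ⊆ sepEdges G C D := by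
    rintro e (rfl | rfl)
    · exact mk_mem_sepEdges.2 ⟨hux, Or.inl ⟨⟨huC, hu.2⟩, hxD, hx.2⟩⟩
    · exact hg.1
  have hxb : s(u, x) ≠ s(u, b) := fun h => hb.1.2 (Sym2.congr_right.1 h ▸ hx.1.2)
  have hF := Set.ncard_sdiff hpair
  rw [Set.ncard_pair hxb] at hF
  have h2 := Set.ncard_pair hxb ▸ Set.ncard_le_ncard hpair
  have hS := Set.ncard_insert_le u (C ∩ D)
  have hCD3 : (C ∩ D).ncard + (sepEdges G C D).ncard = 3 := sepOrder_eq.symm.trans hCD.1.2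
  have hC3 := hC.three_le_ncard
  obtain ⟨v, hvC, hvS⟩ := Set.exists_mem_notMem_of_ncard_lt_ncard
    (s := insert u (C ∩ D)) (t := C) (by omega)
  have := h3.three_le_ncard_add_ncard (R := C) (S := insert u (C ∩ D))
    (F := sepEdges G C D \ {s(u, x), s(u, b)}) (fun v hv w hw hvw => ?_) ⟨v, hvC, hvS⟩
    ⟨x, fun h => hx.2 h, fun h => h.elim (fun h => hx.2 (h ▸ huC)) fun h => hx.2 h.1⟩
  · omega
  have := mem_or_mem_of_union_eq_univ hU2 w
  simp only [Set.mem_sdiff, Set.mem_insert_iff, Set.mem_inter_iff, Set.mem_compl_iff,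
    Set.mem_singleton_iff, not_or, mk_mem_sepEdges, Sym2.eq_iff] at hv hw ⊢
  grind

lemma inter_diff_eq_empty_of_linkEdges_eq_empty (h3 : KConnected 3 G) (hAB : TriSep G A B)
    (hU2 : C ∪ D = Set.univ) (hI : (A \ B) ∩ (C \ D) = ∅) (hP' : (C ∩ D) \ B = ∅)
    (hL : linkEdges G C D A B = ∅) : (A ∩ B) \ D = ∅ := by
  obtain ⟨⟨⟨hU1, ⟨a, ha⟩, -⟩, hAB3⟩, -⟩ := hAB
  by_contra! hP
  have hS := Set.ncard_inter_add_ncard_sdiff_eq_ncard (A ∩ B) D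
  have := hP.ncard_pos
  rw [sepOrder_eq] at hAB3
  have := h3.three_le_ncard_add_ncard (R := A \ B) (S := A ∩ B ∩ D) (F := sepEdges G A B)
    (fun x hx y hy hxy => ?_) ⟨a, ha, fun h => ha.2 h.1.2⟩
    (hP.imp fun u hu => ⟨fun h => h.2 hu.1.2, fun h => hu.2 h.2⟩)
  · omega
  have hxI : x ∉ (A \ B) ∩ (C \ D) := hI ▸ Set.notMem_empty x
  have hxP' : x ∉ (C ∩ D) \ B := hP' ▸ Set.notMem_empty x
  have hyx : s(y, x) ∉ linkEdges G C D A B := hL ▸ Set.notMem_empty _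
  have := mem_or_mem_of_union_eq_univ hU1 y
  have := mem_or_mem_of_union_eq_univ hU2 x
  have := mem_or_mem_of_union_eq_univ hU2 y
  simp only [Set.mem_sdiff, Set.mem_inter_iff, Set.mem_compl_iff, mk_mem_linkEdges,
    mk_mem_sepEdges] at hx hy hxI hxP' hyx ⊢
  have := hxy.symm
  grind

lemma card_le_four_of_forall_adj_mem (h3 : KConnected 3 G) (hU1 : A ∪ B = Set.univ)
    (hU2 : C ∪ D = Set.univ) {u w x y : V} (hu : u ∈ (A ∩ B) \ D) (hx : x ∈ (A ∩ B) \ C)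
    (hw : w ∈ (C ∩ D) \ B) (hy : y ∈ (C ∩ D) \ A)
    (hside : ∀ a b, G.Adj a b → a ≠ u → a ≠ w → a ≠ x → a ≠ y →
      (a ∈ A → b ∈ A) ∧ (a ∈ B → b ∈ B) ∧ (a ∈ C → b ∈ C) ∧ (a ∈ D → b ∈ D)) :
    Nat.card V ≤ 4 := by
  obtain ⟨⟨huA, huB⟩, huD⟩ := hu
  obtain ⟨⟨-, hxB⟩, hxC⟩ := hx
  obtain ⟨-, hwB⟩ := hw
  obtain ⟨-, hyA⟩ := hy
  have hxu : x ≠ u := fun h => hxC (h ▸ (mem_or_mem_of_union_eq_univ hU2 u).resolve_right huD)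
  have hwu : w ≠ u := fun h => hwB (h ▸ huB)
  have hyu : y ≠ u := fun h => hyA (h ▸ huA)
  have hwx : w ≠ x := fun h => hwB (h ▸ hxB)
  have hyw : y ≠ w := fun h => hyA (h ▸ (mem_or_mem_of_union_eq_univ hU1 w).resolve_right hwB)
  -- each corner contains two of `u, w, x, y`, and these separate it from the other two
  have hAC : A ∩ C ⊆ {u, w} := h3.subset_pair_of_forall_adj_mem (o := x) (fun h => hxC h.2)
    hxu hwx.symm fun a ha hau haw b hab => by
      have := hside a b hab hau haw (fun h => hxC (h ▸ ha.2)) fun h => hyA (h ▸ ha.1)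
      exact ⟨this.1 ha.1, this.2.2.1 ha.2⟩
  have hAD : A ∩ D ⊆ {x, w} := h3.subset_pair_of_forall_adj_mem (o := u) (fun h => huD h.2)
    hxu.symm hwu.symm fun a ha hax haw b hab => by
      have := hside a b hab (fun h => huD (h ▸ ha.2)) haw hax fun h => hyA (h ▸ ha.1)
      exact ⟨this.1 ha.1, this.2.2.2 ha.2⟩
  have hBC : B ∩ C ⊆ {u, y} := h3.subset_pair_of_forall_adj_mem (o := w) (fun h => hwB h.1)
    hwu hyw.symm fun a ha hau hay b hab => by
      have := hside a b hab hau (fun h => hwB (h ▸ ha.1)) (fun h => hxC (h ▸ ha.2)) hay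
      exact ⟨this.2.1 ha.1, this.2.2.1 ha.2⟩
  have hBD : B ∩ D ⊆ {x, y} := h3.subset_pair_of_forall_adj_mem (o := u) (fun h => huD h.2)
    hxu.symm hyu.symm fun a ha hax hay b hab => by
      have := hside a b hab (fun h => huD (h ▸ ha.2)) (fun h => hwB (h ▸ ha.1)) hax hay
      exact ⟨this.2.1 ha.1, this.2.2.2 ha.2⟩
  refine (Nat.card_le_card_of_surjective ![u, w, x, y] fun v => ?_).trans_eq (Nat.card_fin 4)
  rcases mem_or_mem_of_union_eq_univ hU1 v with hv | hv <;>
    rcases mem_or_mem_of_union_eq_univ hU2 v with hv' | hv'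
  · rcases hAC ⟨hv, hv'⟩ with rfl | rfl
    exacts [⟨0, rfl⟩, ⟨1, rfl⟩]
  · rcases hAD ⟨hv, hv'⟩ with rfl | rfl
    exacts [⟨2, rfl⟩, ⟨1, rfl⟩]
  · rcases hBC ⟨hv, hv'⟩ with rfl | rfl
    exacts [⟨0, rfl⟩, ⟨3, rfl⟩]
  · rcases hBD ⟨hv, hv'⟩ with rfl | rfl
    exacts [⟨2, rfl⟩, ⟨3, rfl⟩]

lemma inter_diff_eq_empty_or_inter_diff_eq_empty (h3 : KConnected 3 G)
    (hK4 : ¬ Nonempty (G ≃g completeGraph (Fin 4))) (hAB : TriSep G A B) (hCD : TriSep G C D)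
    (hI : (A \ B) ∩ (C \ D) = ∅) (hσ : (cornerSep G A B C D).ncard ≤ 2) :
    (A ∩ B) \ D = ∅ ∨ (C ∩ D) \ B = ∅ := by
  have hU1 := hAB.1.1.1
  have hU2 := hCD.1.1.1
  simp only [← Set.not_nonempty_iff_eq_empty, ← not_and_or]
  rintro ⟨⟨u, hu⟩, ⟨w, hw⟩⟩
  obtain ⟨x, hx, hux⟩ := exists_adj_of_ncard_cornerSep_le_two hAB hU2 hI hσ hu
  obtain ⟨y, hy, hwy⟩ := exists_adj_of_ncard_cornerSep_le_two hCD hU1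
    (by rwa [Set.inter_comm]) (by rwa [cornerSep_swap]) hw
  have hsAB : s(w, y) ∈ sepEdges G A B := mk_mem_sepEdges.2 ⟨hwy, Or.inl
    ⟨⟨(mem_or_mem_of_union_eq_univ hU1 w).resolve_right hw.2, hw.2⟩,
      (mem_or_mem_of_union_eq_univ hU1 y).resolve_left hy.2, hy.2⟩⟩
  have hsCD : s(u, x) ∈ sepEdges G C D := mk_mem_sepEdges.2 ⟨hux, Or.inl
    ⟨⟨(mem_or_mem_of_union_eq_univ hU2 u).resolve_right hu.2, hu.2⟩,
      (mem_or_mem_of_union_eq_univ hU2 x).resolve_left hx.2, hx.2⟩⟩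
  -- the corner separator and the two separators have no room beyond `u, w, x, y`
  have hσ' := ncard_cornerSepVerts_add_ncard_linkEdges_le (G := G) (A := A) (B := B) (C := C)
    (D := D)
  have hAB3 := sepOrder_eq.symm.trans hAB.1.2
  have hCD3 := sepOrder_eq.symm.trans hCD.1.2
  have hABi := ncard_inter_eq (A := A) (B := B) hU2
  have hCDi := ncard_inter_eq (A := C) (B := D) hU1
  rw [inter_inter_inter_swap] at hCDi
  have := (Set.nonempty_of_mem hu).ncard_pos
  have := (Set.nonempty_of_mem hw).ncard_pos
  have := (Set.nonempty_of_mem hx).ncard_pos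
  have := (Set.nonempty_of_mem hy).ncard_pos
  have := (Set.nonempty_of_mem hsAB).ncard_pos
  have := (Set.nonempty_of_mem hsCD).ncard_pos
  have hP : ∀ v ∈ (A ∩ B) \ D, v = u :=
    fun v hv => Set.ncard_le_one_iff_subsingleton.1 (by omega) hv hu
  have hQ : ∀ v ∈ (A ∩ B) \ C, v = x :=
    fun v hv => Set.ncard_le_one_iff_subsingleton.1 (by omega) hv hx
  have hP' : ∀ v ∈ (C ∩ D) \ B, v = w :=
    fun v hv => Set.ncard_le_one_iff_subsingleton.1 (by omega) hv hw
  have hQ' : ∀ v ∈ (C ∩ D) \ A, v = y :=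
    fun v hv => Set.ncard_le_one_iff_subsingleton.1 (by omega) hv hy
  have hZ : A ∩ B ∩ C ∩ D = ∅ := (Set.ncard_eq_zero (Set.toFinite _)).1 (by omega)
  have hAB1 : ∀ e ∈ sepEdges G A B, e = s(w, y) :=
    fun e he => Set.ncard_le_one_iff_subsingleton.1 (by omega) he hsAB
  have hCD1 : ∀ e ∈ sepEdges G C D, e = s(u, x) :=
    fun e he => Set.ncard_le_one_iff_subsingleton.1 (by omega) he hsCD
  exact (h3.four_lt_card hK4).not_ge (card_le_four_of_forall_adj_mem h3 hU1 hU2 hu hx hw hy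
    fun a b hab => mem_of_adj_of_sepEdges_subsingleton hU1 hU2 hP hQ hP' hQ' hZ hAB1 hCD1 hab)

theorem three_le_ncard_cornerSep (h3 : KConnected 3 G)
    (hK4 : ¬ Nonempty (G ≃g completeGraph (Fin 4))) (hAB : TriSep G A B) (hCD : TriSep G C D)
    (hA : HasCycleIn G A) (hC : HasCycleIn G C) (hAC : ¬(A ⊆ D ∧ C ⊆ B)) :
    3 ≤ (cornerSep G A B C D).ncard := by
  have hU1 := hAB.1.1.1
  have hU2 := hCD.1.1.1
  by_contra! hσ
  replace hσ : (cornerSep G A B C D).ncard ≤ 2 := by omega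
  by_cases hI : ((A \ B) ∩ (C \ D)).Nonempty
  · exact hσ.not_gt (three_le_ncard_cornerSep_of_nonempty h3 hU1 hU2 hAB.1.1.2.2 hI)
  rw [Set.not_nonempty_iff_eq_empty] at hI
  have hI' : (C \ D) ∩ (A \ B) = ∅ := by rwa [Set.inter_comm]
  have hσ' : (cornerSep G C D A B).ncard ≤ 2 := by rwa [cornerSep_swap]
  have hL := linkEdges_eq_empty_of_ncard_cornerSep_le_two h3 hAB hCD hC hI hσ
  have hL' := linkEdges_eq_empty_of_ncard_cornerSep_le_two h3 hCD hAB hA hI' hσ'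
  have hlinks : (A ∩ B) \ D = ∅ ∧ (C ∩ D) \ B = ∅ := by
    rcases inter_diff_eq_empty_or_inter_diff_eq_empty h3 hK4 hAB hCD hI hσ with hP | hP'
    · exact ⟨hP, inter_diff_eq_empty_of_linkEdges_eq_empty h3 hCD hU1 hI' hP hL'⟩
    · exact ⟨inter_diff_eq_empty_of_linkEdges_eq_empty h3 hAB hU2 hI hP' hL, hP'⟩
  rcases corner_nonempty_or_link_nonempty hU1 hU2 hAC with h | h | h
  · exact h.ne_empty hI
  · exact h.ne_empty hlinks.1
  · exact h.ne_empty hlinks.2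

end Corners

section CrossingLemma

variable {V : Type*} [Finite V] {G : SimpleGraph V} {A B C D : Set V}

theorem ncard_link_of_not_nested (h3 : KConnected 3 G)
    (hK4 : ¬ Nonempty (G ≃g completeGraph (Fin 4))) (hAB : TriSep G A B) (hCD : TriSep G C D)
    (hABnt : NontrivialSep G A B) (hCDnt : NontrivialSep G C D) (hcross : ¬ Nested A B C D) :
    diagEdges G A B C D = ∅ ∧ jumpEdges G A B C D = ∅ ∧
      ((link G C D A B).ncard = (link G A B C D).ncard ∧
        (link G C D B A).ncard = (link G A B C D).ncard ∧
        (link G A B D C).ncard = (link G A B C D).ncard ∧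
        ((link G A B C D).ncard = 1 ∧ (A ∩ B ∩ C ∩ D).ncard = 1 ∨
          (link G A B C D).ncard = 0 ∧ (A ∩ B ∩ C ∩ D).ncard = 3)) := by
  have hU1 := hAB.1.1.1
  have hU2 := hCD.1.1.1
  have c1 := three_le_ncard_cornerSep h3 hK4 hAB hCD hABnt.1 hCDnt.1
    fun h => hcross (Or.inr (Or.inl h))
  have c2 := three_le_ncard_cornerSep h3 hK4 hAB.symm hCD.symm hABnt.2 hCDnt.2
    fun h => hcross (Or.inr (Or.inr (Or.inl h)))
  have c3 := three_le_ncard_cornerSep h3 hK4 hAB hCD.symm hABnt.1 hCDnt.2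
    fun h => hcross (Or.inl h)
  have c4 := three_le_ncard_cornerSep h3 hK4 hAB.symm hCD hABnt.2 hCDnt.1
    fun h => hcross (Or.inr (Or.inr (Or.inr h)))
  have u1 := ncard_cornerSep_le (G := G) (A := A) (B := B) (C := C) (D := D)
  have u2 := ncard_cornerSep_le (G := G) (A := B) (B := A) (C := D) (D := C)
  have u3 := ncard_cornerSep_le (G := G) (A := A) (B := B) (C := D) (D := C)
  have u4 := ncard_cornerSep_le (G := G) (A := B) (B := A) (C := C) (D := D)
  rw [link_comm (A := C) (B := D), link_comm (A := A) (B := B), Set.inter_comm B A,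
    Set.inter_right_comm (A ∩ B) D C, cornerDiagEdges_comm] at u2
  rw [link_comm (A := C) (B := D), Set.inter_right_comm (A ∩ B) D C] at u3
  rw [link_comm (A := A) (B := B), Set.inter_comm B A, cornerDiagEdges_comm] at u4
  have b1 := ncard_link_add_ncard_link_add_le_sepOrder (G := G) (A := A) (B := B) hU2
  have b2 := ncard_link_add_ncard_link_add_le_sepOrder (G := G) (A := C) (B := D) hU1
  rw [inter_inter_inter_swap, diagEdges_swap, jumpEdges_swap] at b2
  have hd := ncard_diagEdges (G := G) (A := A) (B := B) (C := C) (D := D)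
  rw [hAB.1.2] at b1
  rw [hCD.1.2] at b2
  refine ⟨(Set.ncard_eq_zero (Set.toFinite _)).1 (by omega), ?_, by omega⟩
  refine Set.eq_empty_of_subset_empty fun e he => ?_
  rcases jumpEdges_subset hU1 hU2 he with h | h
  · exact ((Set.ncard_eq_zero (Set.toFinite _)).1 (by omega : (jumpEdges G A B C D ∩
      sepEdges G A B).ncard = 0)).subset ⟨he, h⟩
  · exact ((Set.ncard_eq_zero (Set.toFinite _)).1 (by omega : (jumpEdges G A B C D ∩
      sepEdges G C D).ncard = 0)).subset ⟨he, h⟩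

lemma not_connected_of_ncard_link_eq_zero (hAB : TriSep G A B) (hCD : TriSep G C D)
    (hcross : ¬ Nested A B C D) (hA : (link G C D A B).ncard = 0)
    (hB : (link G C D B A).ncard = 0) (hC : (link G A B C D).ncard = 0)
    (hD : (link G A B D C).ncard = 0) (hZ : (A ∩ B ∩ C ∩ D).ncard = 3) :
    ¬((G.induce (A \ B)).Connected ∨ (G.induce (B \ A)).Connected) := by
  have hU1 := hAB.1.1.1
  have hU2 := hCD.1.1.1
  have hvert : ∀ {A B C D : Set V}, (link G A B C D).ncard = 0 → (A ∩ B) \ D = ∅ :=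
    fun h => (Set.ncard_eq_zero (Set.toFinite _)).1 (by rw [ncard_link] at h; omega)
  have hsep : sepEdges G C D = ∅ := by
    have := sepOrder_eq.symm.trans hCD.1.2
    have := Set.ncard_le_ncard (s := A ∩ B ∩ C ∩ D) (t := C ∩ D) fun v hv => ⟨hv.1.2, hv.2⟩
    exact (Set.ncard_eq_zero (Set.toFinite _)).1 (by omega)
  rintro (h | h)
  · exact not_connected_induce_sdiff hU1 hU2 (fun h => hcross (Or.inr (Or.inl h)))
      (fun h => hcross (Or.inl h)) (hvert hC) (hvert hD) (hvert hA) hsep h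
  · rw [link_comm] at hC hD
    exact not_connected_induce_sdiff (Set.union_comm A B ▸ hU1) hU2
      (fun h => hcross (Or.inr (Or.inr (Or.inr h)))) (fun h => hcross (Or.inr (Or.inr (Or.inl h))))
      (hvert hC) (hvert hD) (hvert hB) hsep h

end CrossingLemma

section

variable {V : Type*} [Fintype V] [DecidableEq V]

/-- Crossing Lemma: If two nontrivial tri-separations of a
3-connected graph other than `K₄` cross, then exactly one of: (1) all links
have size one and the centre is a single vertex; (2) all links are empty and
the centre consists of three vertices. There are no jumping edges, and if
`(A,B)` is half-connected then (1) holds. -/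
theorem stmt7 (G : SimpleGraph V) (h3 : KConnected 3 G)
    (hK4 : ¬ Nonempty (G ≃g completeGraph (Fin 4)))
    (A B C D : Set V) (hAB : TriSep G A B) (hCD : TriSep G C D)
    (hABnt : NontrivialSep G A B) (hCDnt : NontrivialSep G C D)
    (hcross : ¬ Nested A B C D) :
    Xor'
        ((link G C D A B).ncard = 1 ∧ (link G C D B A).ncard = 1 ∧
          (link G A B C D).ncard = 1 ∧ (link G A B D C).ncard = 1 ∧
          (A ∩ B ∩ C ∩ D).ncard = 1 ∧ diagEdges G A B C D = ∅)
        (link G C D A B = ∅ ∧ link G C D B A = ∅ ∧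
          link G A B C D = ∅ ∧ link G A B D C = ∅ ∧
          (A ∩ B ∩ C ∩ D).ncard = 3 ∧ diagEdges G A B C D = ∅) ∧
      jumpEdges G A B C D = ∅ ∧
      (((G.induce (A \ B)).Connected ∨ (G.induce (B \ A)).Connected) →
        ((link G C D A B).ncard = 1 ∧ (link G C D B A).ncard = 1 ∧
          (link G A B C D).ncard = 1 ∧ (link G A B D C).ncard = 1 ∧
          (A ∩ B ∩ C ∩ D).ncard = 1 ∧ diagEdges G A B C D = ∅)) := by
  obtain ⟨hdiag, hjump, hA, hB, hD, hcase⟩ :=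
    ncard_link_of_not_nested h3 hK4 hAB hCD hABnt hCDnt hcross
  have hempty : ∀ {S : Set (V ⊕ Sym2 V)}, S.ncard = 0 → S = ∅ :=
    fun h => (Set.ncard_eq_zero (Set.toFinite _)).1 h
  rcases hcase with ⟨h1, hZ⟩ | ⟨h0, hZ⟩
  · have hcase1 := (⟨by omega, by omega, h1, by omega, hZ, hdiag⟩ : (link G C D A B).ncard = 1 ∧
      (link G C D B A).ncard = 1 ∧ (link G A B C D).ncard = 1 ∧ (link G A B D C).ncard = 1 ∧
      (A ∩ B ∩ C ∩ D).ncard = 1 ∧ diagEdges G A B C D = ∅)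
    exact ⟨Or.inl ⟨hcase1, fun h => by omega⟩, hjump, fun _ => hcase1⟩
  · refine ⟨Or.inr ⟨⟨hempty (by omega), hempty (by omega), hempty h0, hempty (by omega), hZ,
      hdiag⟩, fun h => by omega⟩, hjump, fun hconn => absurd hconn ?_⟩
    exact not_connected_of_ncard_link_eq_zero hAB hCD hcross (by omega) (by omega) h0 (by omega) hZ

end

end Paper
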